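/- arXiv:2510.04529 — 3 statements merged into one kernel-verified Lean document; each statement's English description precedes it below -/
import Mathlib

section
/- For any deterministic classical strategy in the Magic Square Game (functions a : {1,2,3} → {0,1}^3 assigning Alice's answer to each column question and b : {1,2,3} → {0,1}^3 assigning Bob's answer to each row question, with par(a(c)) = 0 and par(b(r)) = 1 for all r,c), there exists at least one pair (r,c) ∈ {1,2,3}² such that a(c)[r] ≠ b(r)[c]. Consequently the classical winning probability over uniform (r,c) is at most 8/9. -/
theorem magic_square_classical_bound
    (a b : Fin 3 → (Fin 3 → ZMod 2))
    (ha : ∀ c, ∑ i, a c i = 0) (hb : ∀ r, ∑ i, b r i = 1) :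
    (∃ r c : Fin 3, a c r ≠ b r c) ∧
    (Finset.univ.filter (fun p : Fin 3 × Fin 3 => a p.2 p.1 = b p.1 p.2)).card ≤ 8 := by
  have key : ¬ ∀ r c : Fin 3, a c r = b r c := by
    intro h
    have h0 : (∑ c, ∑ r, a c r) = 0 := by simp [ha]
    have h1 : (∑ c, ∑ r, a c r) = ∑ r, ∑ c, b r c := by
      rw [Finset.sum_comm]
      exact Finset.sum_congr rfl fun r _ => Finset.sum_congr rfl fun c _ => h r c
    rw [h1] at h0
    simp [hb, Fin.sum_univ_three] at h0
    revert h0; decide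
  constructor
  · by_contra hc
    push_neg at hc
    exact key fun r c => hc r c
  · by_contra hcard
    push_neg at hcard
    have hle : (Finset.univ.filter (fun p : Fin 3 × Fin 3 => a p.2 p.1 = b p.1 p.2)).card ≤ 9 := by
      calc _ ≤ (Finset.univ : Finset (Fin 3 × Fin 3)).card := Finset.card_filter_le _ _
        _ = 9 := by simp
    have heq : (Finset.univ.filter (fun p : Fin 3 × Fin 3 => a p.2 p.1 = b p.1 p.2)) = Finset.univ := by
      apply Finset.eq_univ_of_card
      simp only [Finset.card_univ, Fintype.card_prod, Fintype.card_fin]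
      omega
    apply key
    intro r c
    have := Finset.eq_univ_iff_forall.mp heq (r, c)
    simpa using this
end

section
/- Measuring in the Hadamard basis the register R of the state (|0⟩_A|x₀⟩_R + (−1)^z |1⟩_A|x₁⟩_R)/√2 with outcome d ∈ {0,1}^n collapses the A register to the state (|0⟩ + (−1)^{z ⊕ d·(x₀⊕x₁)}|1⟩)/√2. Formally: applying H^{⊗n} to R and projecting R onto |d⟩ leaves register A (after normalization) in (|0⟩ + (−1)^{z ⊕ d·(x₀⊕x₁)}|1⟩)/√2, and every outcome d occurs with equal probability 2^{−n} when x₀ ≠ x₁. -/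
/-!
Projecting `H^{⊗n}|y⟩` onto `|d⟩` gives the amplitude `(-1)^{d·y} / √2^n`, so the `|0⟩_A` branch
keeps `(-1)^{d·x₀}` and the `|1⟩_A` branch keeps `(-1)^{z + d·x₁}`. Since `d·` is additive and
phases square to one, `(-1)^{d·x₁} = (-1)^{d·x₀} (-1)^{d·(x₀ + x₁)}`: pulling out the global phase
`(-1)^{d·x₀}` leaves the relative phase `(-1)^{z + d·(x₀ + x₁)}`, and each branch has weight `2^{-n}/2`.
-/

noncomputable section

def bdot {n : ℕ} (e x : Fin n → ZMod 2) : ZMod 2 := ∑ i, e i * x i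

def phase (t : ZMod 2) : ℂ := (-1 : ℂ) ^ t.val

lemma phase_zero : phase 0 = 1 := by simp [phase]

lemma phase_add (s t : ZMod 2) : phase (s + t) = phase s * phase t := by
  rw [phase, ZMod.val_add, ← neg_one_pow_eq_pow_mod_two, pow_add, phase, phase]

lemma phase_mul_self (t : ZMod 2) : phase t * phase t = 1 := by
  rw [← phase_add, CharTwo.add_self_eq_zero, phase_zero]

lemma normSq_phase (t : ZMod 2) : Complex.normSq (phase t) = 1 := by
  simp [phase]

lemma bdot_add {n : ℕ} (d x y : Fin n → ZMod 2) :
    bdot d (x + y) = bdot d x + bdot d y := by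
  simp only [bdot, Pi.add_apply, mul_add, Finset.sum_add_distrib]

lemma phase_bdot_eq_mul {n : ℕ} (d x y : Fin n → ZMod 2) :
    phase (bdot d y) = phase (bdot d x) * phase (bdot d (x + y)) := by
  rw [bdot_add, phase_add, ← mul_assoc, phase_mul_self, one_mul]

lemma funext_zmod_two {β : Type*} {f g : ZMod 2 → β} (h0 : f 0 = g 0) (h1 : f 1 = g 1) :
    f = g := by
  funext a
  fin_cases a
  exacts [h0, h1]

lemma sum_zmod_two {M : Type*} [AddCommMonoid M] (f : ZMod 2 → M) : ∑ a, f a = f 0 + f 1 :=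
  Fin.sum_univ_two f

theorem hadamard_measurement_collapse_general {n : ℕ} (x0 x1 : Fin n → ZMod 2)
    (z : ZMod 2) (d : Fin n → ZMod 2) :
    let ψ : ZMod 2 × (Fin n → ZMod 2) → ℂ := fun p =>
      (Real.sqrt 2 : ℂ)⁻¹ *
        ((if p.1 = 0 ∧ p.2 = x0 then 1 else 0) +
          phase z * (if p.1 = 1 ∧ p.2 = x1 then 1 else 0))
    let vd : ZMod 2 → ℂ := fun a =>
      ∑ y : Fin n → ZMod 2, (phase (bdot d y) / (Real.sqrt 2 : ℂ) ^ n) * ψ (a, y)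
    vd = (phase (bdot d x0) / (Real.sqrt 2 : ℂ) ^ n) •
        (fun a : ZMod 2 =>
          (Real.sqrt 2 : ℂ)⁻¹ * (if a = 0 then 1 else phase (z + bdot d (x0 + x1)))) ∧
    ∑ a : ZMod 2, Complex.normSq (vd a) = ((2 : ℝ) ^ n)⁻¹ := by
  intro ψ vd
  have vd_zero : vd 0 = phase (bdot d x0) / (Real.sqrt 2 : ℂ) ^ n * (Real.sqrt 2 : ℂ)⁻¹ := by
    simp [vd, ψ]
  have vd_one :
      vd 1 = phase (bdot d x1) / (Real.sqrt 2 : ℂ) ^ n * ((Real.sqrt 2 : ℂ)⁻¹ * phase z) := by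
    simp [vd, ψ]
  constructor
  · refine funext_zmod_two ?_ ?_
    · simp [vd_zero]
    · simp [vd_one, phase_bdot_eq_mul d x0 x1, phase_add]
      ring
  · rw [sum_zmod_two]
    simp [vd_zero, vd_one, normSq_phase]
    ring

theorem hadamard_measurement_collapse {n : ℕ} (x0 x1 : Fin n → ZMod 2) (hx : x0 ≠ x1)
    (z : ZMod 2) (d : Fin n → ZMod 2) :
    let ψ : ZMod 2 × (Fin n → ZMod 2) → ℂ := fun p =>
      (Real.sqrt 2 : ℂ)⁻¹ *
        ((if p.1 = 0 ∧ p.2 = x0 then 1 else 0) +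
          phase z * (if p.1 = 1 ∧ p.2 = x1 then 1 else 0))
    let vd : ZMod 2 → ℂ := fun a =>
      ∑ y : Fin n → ZMod 2, (phase (bdot d y) / (Real.sqrt 2 : ℂ) ^ n) * ψ (a, y)
    vd = (phase (bdot d x0) / (Real.sqrt 2 : ℂ) ^ n) •
        (fun a : ZMod 2 =>
          (Real.sqrt 2 : ℂ)⁻¹ * (if a = 0 then 1 else phase (z + bdot d (x0 + x1)))) ∧
    ∑ a : ZMod 2, Complex.normSq (vd a) = ((2 : ℝ) ^ n)⁻¹ :=
  hadamard_measurement_collapse_general x0 x1 z d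
end
end

section
/- The Mermin–Peres strategy wins the Magic Square Game with probability 1: with Alice and Bob sharing two EPR pairs (the state (|00⟩+|11⟩)⊗(|00⟩+|11⟩)/2 across registers A₁A₂ for Alice and B₁B₂ for Bob, paired A₁↔B₁, A₂↔B₂), if Bob measures the three commuting observables of row r of the magic square table on his registers and Alice measures the three commuting observables of column c on hers, then (i) Bob's three ±1 outcomes multiply to +1, (ii) Alice's three outcomes multiply to −1, and (iii) with probability 1 the outcome of Bob at position (r,c) equals the outcome of Alice at position (r,c). -/
open Matrix
open scoped Kronecker

noncomputable section

def Xp : Matrix (Fin 2) (Fin 2) ℂ := !![0, 1; 1, 0]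
def Yp : Matrix (Fin 2) (Fin 2) ℂ := !![0, -Complex.I; Complex.I, 0]
def Zp : Matrix (Fin 2) (Fin 2) ℂ := !![1, 0; 0, -1]

def Op : Fin 3 → Fin 3 → Matrix (Fin 2 × Fin 2) (Fin 2 × Fin 2) ℂ :=
  ![![Xp ⊗ₖ (1 : Matrix (Fin 2) (Fin 2) ℂ), (1 : Matrix (Fin 2) (Fin 2) ℂ) ⊗ₖ Xp, Xp ⊗ₖ Xp],
    ![(1 : Matrix (Fin 2) (Fin 2) ℂ) ⊗ₖ Zp, Zp ⊗ₖ (1 : Matrix (Fin 2) (Fin 2) ℂ), Zp ⊗ₖ Zp],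
    ![-(Xp ⊗ₖ Zp), -(Zp ⊗ₖ Xp), Yp ⊗ₖ Yp]]

/-- The shared state of two EPR pairs: Alice holds the first pair of qubits,
Bob the second, paired A₁↔B₁ and A₂↔B₂. -/
def Ψ : ((Fin 2 × Fin 2) × (Fin 2 × Fin 2)) → ℂ := fun p =>
  ((if p.1.1 = p.2.1 then 1 else 0) * (if p.1.2 = p.2.2 then 1 else 0)) / 2


lemma hXX : Xp * Xp = 1 := by
  ext i j; fin_cases i <;> fin_cases j <;> simp [Xp, Matrix.mul_apply, Fin.sum_univ_two, Matrix.one_apply]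
lemma hZZ : Zp * Zp = 1 := by
  ext i j; fin_cases i <;> fin_cases j <;> simp [Zp, Matrix.mul_apply, Fin.sum_univ_two, Matrix.one_apply]
lemma hXZ : Xp * Zp = -(Zp * Xp) := by
  ext i j; fin_cases i <;> fin_cases j <;> simp [Xp, Zp, Matrix.mul_apply, Fin.sum_univ_two]
lemma hXY : Xp * Yp = -(Yp * Xp) := by
  ext i j; fin_cases i <;> fin_cases j <;> simp [Xp, Yp, Matrix.mul_apply, Fin.sum_univ_two]
lemma hZY : Zp * Yp = -(Yp * Zp) := by
  ext i j; fin_cases i <;> fin_cases j <;> simp [Zp, Yp, Matrix.mul_apply, Fin.sum_univ_two]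
lemma hXZY : Xp * Zp * Yp = -Complex.I • 1 := by
  ext i j; fin_cases i <;> fin_cases j <;> simp [Xp, Zp, Yp, Matrix.mul_apply, Fin.sum_univ_two, Matrix.one_apply]
lemma hZXY : Zp * Xp * Yp = Complex.I • 1 := by
  ext i j; fin_cases i <;> fin_cases j <;> simp [Xp, Zp, Yp, Matrix.mul_apply, Fin.sum_univ_two, Matrix.one_apply]

lemma neg_kron {l m n p : Type*} (A : Matrix l m ℂ) (B : Matrix n p ℂ) :
    (-A) ⊗ₖ B = -(A ⊗ₖ B) := by
  ext i j; simp [Matrix.kroneckerMap_apply]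
lemma kron_neg {l m n p : Type*} (A : Matrix l m ℂ) (B : Matrix n p ℂ) :
    A ⊗ₖ (-B) = -(A ⊗ₖ B) := by
  ext i j; simp [Matrix.kroneckerMap_apply]
lemma hXt : Xpᵀ = Xp := by ext i j; fin_cases i <;> fin_cases j <;> simp [Xp]
lemma hZt : Zpᵀ = Zp := by ext i j; fin_cases i <;> fin_cases j <;> simp [Zp]
lemma hYt : Ypᵀ = -Yp := by ext i j; fin_cases i <;> fin_cases j <;> simp [Yp]

lemma lhs_corr (M : Matrix (Fin 2 × Fin 2) (Fin 2 × Fin 2) ℂ) :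
    (M ⊗ₖ (1 : Matrix (Fin 2 × Fin 2) (Fin 2 × Fin 2) ℂ)).mulVec Ψ
      = fun p => M p.1 p.2 / 2 := by
  funext p
  obtain ⟨⟨a1, a2⟩, b1, b2⟩ := p
  simp [Matrix.mulVec, dotProduct, Fintype.sum_prod_type, Fin.sum_univ_two,
    Matrix.kroneckerMap_apply, Matrix.one_apply, Ψ]
  fin_cases b1 <;> fin_cases b2 <;> simp <;> ring

lemma rhs_corr (M : Matrix (Fin 2 × Fin 2) (Fin 2 × Fin 2) ℂ) :
    ((1 : Matrix (Fin 2 × Fin 2) (Fin 2 × Fin 2) ℂ) ⊗ₖ M).mulVec Ψ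
      = fun p => M p.2 p.1 / 2 := by
  funext p
  obtain ⟨⟨a1, a2⟩, b1, b2⟩ := p
  simp [Matrix.mulVec, dotProduct, Fintype.sum_prod_type, Fin.sum_univ_two,
    Matrix.kroneckerMap_apply, Matrix.one_apply, Ψ]
  fin_cases a1 <;> fin_cases a2 <;> simp <;> ring

lemma op_symm (r c : Fin 3) : (Op r c)ᵀ = Op r c := by
  fin_cases r <;> fin_cases c <;>
    simp [Op, ← Matrix.kroneckerMap_transpose, hXt, hZt, hYt, neg_kron, kron_neg,
      Matrix.transpose_one]

theorem mermin_peres_wins_with_probability_one :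
    -- the three observables of each row (Bob) and column (Alice) commute
    (∀ r c c', Op r c * Op r c' = Op r c' * Op r c) ∧
    (∀ c r r', Op r c * Op r' c = Op r' c * Op r c) ∧
    -- (i) Bob's three ±1 outcomes (row r) multiply to +1 on the shared state
    (∀ r : Fin 3,
      ((1 : Matrix (Fin 2 × Fin 2) (Fin 2 × Fin 2) ℂ) ⊗ₖ
        (Op r 0 * Op r 1 * Op r 2)).mulVec Ψ = Ψ) ∧
    -- (ii) Alice's three ±1 outcomes (column c) multiply to −1 on the shared state
    (∀ c : Fin 3,
      ((Op 0 c * Op 1 c * Op 2 c) ⊗ₖ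
        (1 : Matrix (Fin 2 × Fin 2) (Fin 2 × Fin 2) ℂ)).mulVec Ψ = -Ψ) ∧
    -- (iii) perfect correlation at the intersection (r,c): with probability 1
    -- Alice's and Bob's outcomes for O_{rc} agree
    (∀ r c : Fin 3,
      ((Op r c) ⊗ₖ (1 : Matrix (Fin 2 × Fin 2) (Fin 2 × Fin 2) ℂ)).mulVec Ψ =
      ((1 : Matrix (Fin 2 × Fin 2) (Fin 2 × Fin 2) ℂ) ⊗ₖ (Op r c)).mulVec Ψ) := by
  refine ⟨?_, ?_, ?_, ?_, ?_⟩
  · intro r c c'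
    fin_cases r <;> fin_cases c <;> fin_cases c' <;>
      simp [Op, neg_kron, kron_neg, ← Matrix.mul_kronecker_mul, hXX, hZZ, hXZ, hXY, hZY]
  · intro c r r'
    fin_cases c <;> fin_cases r <;> fin_cases r' <;>
      simp [Op, neg_kron, kron_neg, ← Matrix.mul_kronecker_mul, hXX, hZZ, hXZ, hXY, hZY]
  · intro r
    have h : Op r 0 * Op r 1 * Op r 2 = 1 := by
      fin_cases r <;>
        simp [Op, neg_kron, kron_neg, ← Matrix.mul_kronecker_mul, hXX, hZZ, hXZY, hZXY,
          Matrix.smul_kronecker, Matrix.kronecker_smul, Matrix.one_kronecker_one, smul_smul,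
          Complex.I_mul_I]
    rw [h, Matrix.one_kronecker_one, Matrix.one_mulVec]
  · intro c
    have h : Op 0 c * Op 1 c * Op 2 c = -1 := by
      fin_cases c <;>
        simp [Op, neg_kron, kron_neg, ← Matrix.mul_kronecker_mul, hXX, hZZ, hXZY, hZXY,
          Matrix.smul_kronecker, Matrix.kronecker_smul, Matrix.one_kronecker_one, smul_smul,
          Complex.I_mul_I]
    rw [h, neg_kron, Matrix.one_kronecker_one, Matrix.neg_mulVec, Matrix.one_mulVec]
  · intro r c
    rw [lhs_corr, rhs_corr]
    funext p
    have h := congrFun (congrFun (op_symm r c) p.2) p.1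
    rw [Matrix.transpose_apply] at h
    rw [h]
end
end
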